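/- Let K be a finite abelian group whose exponent is squarefree. For each automorphism ψ of K, let K_ψ denote the K-K-biset with underlying set K, left action by left multiplication and right action x·k := x ψ(k). Then the disjoint union Ω' = ⊔_{ψ ∈ Aut(K)} K_ψ is left F-stable for the largest fusion system F on K; explicitly, for every subgroup L ≤ K and every injective group homomorphism φ: L → K, the L-K-bisets _LΩ' and _φΩ' are isomorphic. -/

import Mathlib

/-- An `S`-`S`-biset structure on a type `Ω`: commuting left and right `S`-actions. -/
structure Biset (S : Type*) [Group S] (Ω : Type*) where
  smul : S → Ω → Ω
  rsmul : Ω → S → Ω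
  one_smul : ∀ x, smul 1 x = x
  mul_smul : ∀ s t x, smul (s * t) x = smul s (smul t x)
  rsmul_one : ∀ x, rsmul x 1 = x
  rsmul_mul : ∀ x s t, rsmul x (s * t) = rsmul (rsmul x s) t
  smul_rsmul : ∀ s x t, rsmul (smul s x) t = smul s (rsmul x t)

/-!
Every injective `φ : L →* K` extends to an automorphism `Φ` of `K`, and then
`(ψ, x) ↦ (Φ ∘ ψ, Φ x)` is the required isomorphism of bisets. The extension is built one
prime-order generator at a time. If `L ≠ K`, squarefreeness of the exponent yields `h ∉ L` of prime
order `p`, and counting solutions of `x ^ p = 1` in `L` and in `K` yields `g ∉ φ(L)` of order `p`.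
Then `⟨h⟩ ∩ L = 1` and `⟨g⟩ ∩ φ(L) = 1`, so `L ⊔ ⟨h⟩ ≅ L × ⟨h⟩` and `φ` extends injectively by
`h ↦ g`. Once `L = K`, an injective endomorphism of a finite group is bijective.
-/

open Subgroup

theorem disjoint_zpowers_of_prime_orderOf {G : Type*} [Group G] [Finite G] {L : Subgroup G}
    {h : G} (hp : (orderOf h).Prime) (hL : h ∉ L) : Disjoint L (zpowers h) := by
  rw [disjoint_iff]
  have hdvd : Nat.card ↥(L ⊓ zpowers h) ∣ orderOf h :=
    Nat.card_zpowers h ▸ card_dvd_of_le inf_le_right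
  rcases hp.eq_one_or_self_of_dvd _ hdvd with h1 | hh
  · exact card_eq_one.mp h1
  · have heq : L ⊓ zpowers h = zpowers h :=
      eq_of_le_of_card_ge inf_le_right (by rw [hh, Nat.card_zpowers])
    exact absurd ((heq ▸ inf_le_left : zpowers h ≤ L) (mem_zpowers h)) hL

theorem exists_pow_eq_one_notMem_range {G : Type*} [Group G] [Finite G] {L : Subgroup G}
    {φ : L →* G} (hφ : Function.Injective φ) {n : ℕ} {h : G} (hn : h ^ n = 1) (hL : h ∉ L) :
    ∃ g : G, g ^ n = 1 ∧ g ∉ φ.range := by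
  by_contra! hcover
  let T : Set L := {l | l ^ n = 1}
  have hsub : {x : G | x ^ n = 1} ⊆ φ '' T := by
    intro x hx
    obtain ⟨l, rfl⟩ := hcover x hx
    exact ⟨l, hφ (by simpa using hx), rfl⟩
  have hvalT : Subtype.val '' T ⊆ {x : G | x ^ n = 1} := by
    rintro _ ⟨l, hl, rfl⟩
    simpa using congrArg Subtype.val hl
  have hssub : Subtype.val '' T ⊂ {x : G | x ^ n = 1} :=
    (Set.ssubset_iff_of_subset hvalT).mpr ⟨h, hn, by rintro ⟨l, -, rfl⟩; exact hL l.2⟩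
  have := calc
    {x : G | x ^ n = 1}.ncard ≤ (φ '' T).ncard := Set.ncard_le_ncard hsub
    _ = (Subtype.val '' T).ncard := by
      rw [Set.ncard_image_of_injective _ hφ, Set.ncard_image_of_injective _ Subtype.val_injective]
    _ < {x : G | x ^ n = 1}.ncard := Set.ncard_lt_ncard hssub
  exact this.false

section Extension

variable {K : Type*} [CommGroup K]

theorem MonoidHom.coprod_injective_of_disjoint {A B : Type*} [Group A] [Group B]
    {f : A →* K} {g : B →* K} (hf : Function.Injective f) (hg : Function.Injective g)
    (hfg : Disjoint f.range g.range) : Function.Injective (f.coprod g) := by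
  rw [← MonoidHom.ker_eq_bot_iff, eq_bot_iff]
  rintro ⟨a, b⟩ hab
  have hfa : f a = g b⁻¹ := by
    rw [map_inv, eq_inv_iff_mul_eq_one]
    exact hab
  have hfa1 : f a = 1 :=
    disjoint_iff_inf_le.mp hfg ⟨⟨a, rfl⟩, ⟨b⁻¹, hfa.symm⟩⟩
  have hgb1 : g b = 1 := by rwa [hfa1, eq_comm, map_inv, inv_eq_one] at hfa
  simp only [mem_bot, Prod.mk_eq_one]
  exact ⟨hf (hfa1.trans f.map_one.symm), hg (hgb1.trans g.map_one.symm)⟩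

theorem Subgroup.sup_eq_range_coprod (L H : Subgroup K) :
    L ⊔ H = (L.subtype.coprod H.subtype).range := by
  ext x
  simp [mem_sup, eq_comm]

theorem exists_injective_extension_sup {L H : Subgroup K} (hLH : Disjoint L H)
    (φ : L →* K) (ψ : H →* K) (hφ : Function.Injective φ) (hψ : Function.Injective ψ)
    (hφψ : Disjoint φ.range ψ.range) :
    ∃ χ : ↥(L ⊔ H) →* K, Function.Injective χ ∧
      ∀ l : L, χ (inclusion le_sup_left l) = φ l := by
  have hLH' : Disjoint L.subtype.range H.subtype.range := by simpa using hLH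
  let e : L × H ≃* ↥(L ⊔ H) :=
    (MonoidHom.ofInjective (MonoidHom.coprod_injective_of_disjoint L.subtype_injective
      H.subtype_injective hLH')).trans (MulEquiv.subgroupCongr (L.sup_eq_range_coprod H).symm)
  refine ⟨(φ.coprod ψ).comp e.symm.toMonoidHom,
    (MonoidHom.coprod_injective_of_disjoint hφ hψ hφψ).comp e.symm.injective, fun l => ?_⟩
  have : e.symm (inclusion le_sup_left l) = (l, 1) := by
    rw [MulEquiv.symm_apply_eq]
    ext
    simp [e, MonoidHom.ofInjective_apply]
  simp [this]

variable [Finite K]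

theorem exists_prime_pow_eq_one_notMem (hexp : Squarefree (Monoid.exponent K))
    {L : Subgroup K} (hL : L ≠ ⊤) : ∃ p : ℕ, p.Prime ∧ ∃ h : K, h ^ p = 1 ∧ h ∉ L := by
  have : Nontrivial (K ⧸ L) := QuotientGroup.nontrivial_iff.mpr hL
  obtain ⟨p, hp, hpdvd⟩ := Nat.exists_prime_and_dvd (Finite.one_lt_card (α := K ⧸ L)).ne'
  have := Fact.mk hp
  obtain ⟨y, hy⟩ := exists_prime_orderOf_dvd_card' p hpdvd
  obtain ⟨x, rfl⟩ := QuotientGroup.mk_surjective y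
  obtain ⟨s, hs⟩ : p ∣ orderOf x := hy ▸ orderOf_map_dvd (QuotientGroup.mk' L) x
  have hps : ¬ p ∣ s := by
    rintro ⟨t, rfl⟩
    have hsq : Squarefree (orderOf x) := hexp.squarefree_of_dvd (Monoid.order_dvd_exponent x)
    exact hp.not_isUnit (hsq p ⟨t, by rw [hs, mul_assoc]⟩)
  refine ⟨p, hp, x ^ s, by rw [← pow_mul, mul_comm, ← hs, pow_orderOf_eq_one], fun hmem => hps ?_⟩
  rw [← hy, orderOf_dvd_iff_pow_eq_one, ← QuotientGroup.mk_pow, QuotientGroup.eq_one_iff]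
  exact hmem

theorem exists_injective_extension_lt (hexp : Squarefree (Monoid.exponent K)) {L : Subgroup K}
    (hL : L ≠ ⊤) {φ : L →* K} (hφ : Function.Injective φ) :
    ∃ (L' : Subgroup K) (hLL' : L < L') (φ' : L' →* K), Function.Injective φ' ∧
      ∀ l : L, φ' (inclusion hLL'.le l) = φ l := by
  obtain ⟨p, hp, h, hhp, hhL⟩ := exists_prime_pow_eq_one_notMem hexp hL
  obtain ⟨g, hgp, hgφ⟩ := exists_pow_eq_one_notMem_range hφ hhp hhL
  have := Fact.mk hp
  have hh : orderOf h = p := orderOf_eq_prime hhp (by rintro rfl; exact hhL L.one_mem)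
  have hg : orderOf g = p := orderOf_eq_prime hgp (by rintro rfl; exact hgφ φ.range.one_mem)
  let ψ : zpowers h →* K := (zpowers g).subtype.comp
    (mulEquivOfOrderOfEq (g := (⟨h, mem_zpowers h⟩ : zpowers h)) (g' := ⟨g, mem_zpowers g⟩)
      (by rintro ⟨_, k, rfl⟩; exact ⟨k, rfl⟩) (by rintro ⟨_, k, rfl⟩; exact ⟨k, rfl⟩)
      (by simp [orderOf_mk, hh, hg])).toMonoidHom
  have hψ : ψ.range ≤ zpowers g := by
    rintro _ ⟨x, rfl⟩
    exact SetLike.coe_mem _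
  obtain ⟨χ, hχ, hχφ⟩ := exists_injective_extension_sup
    (disjoint_zpowers_of_prime_orderOf (hh ▸ hp) hhL) φ ψ hφ
    ((zpowers g).subtype_injective.comp (MulEquiv.injective _))
    ((disjoint_zpowers_of_prime_orderOf (hg ▸ hp) hgφ).mono_right hψ)
  exact ⟨L ⊔ zpowers h, left_lt_sup.mpr (fun hle => hhL (hle (mem_zpowers h))), χ, hχ, hχφ⟩

theorem exists_mulEquiv_extension (hexp : Squarefree (Monoid.exponent K)) (L : Subgroup K)
    {φ : L →* K} (hφ : Function.Injective φ) : ∃ Φ : K ≃* K, ∀ l : L, Φ l = φ l := by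
  induction L using WellFoundedGT.induction with
  | ind L ih =>
  by_cases hL : L = ⊤
  · subst hL
    let ψ : K →* K := φ.comp topEquiv.symm.toMonoidHom
    have hψ : Function.Bijective ψ :=
      Finite.injective_iff_bijective.mp (hφ.comp topEquiv.symm.injective)
    exact ⟨MulEquiv.ofBijective ψ hψ, fun l => rfl⟩
  · obtain ⟨L', hLL', φ', hφ', hφ'φ⟩ := exists_injective_extension_lt hexp hL hφ
    obtain ⟨Φ, hΦ⟩ := ih L' hLL' hφ'
    exact ⟨Φ, fun l => (hΦ (inclusion hLL'.le l)).trans (hφ'φ l)⟩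

end Extension

def autUnionBiset (K : Type*) [CommGroup K] : Biset K ((K ≃* K) × K) where
  smul g p := (p.1, g * p.2)
  rsmul p k := (p.1, p.2 * p.1 k)
  one_smul _ := by simp
  mul_smul _ _ _ := by simp [mul_assoc]
  rsmul_one _ := by simp
  rsmul_mul _ _ _ := by simp [mul_assoc]
  smul_rsmul _ _ _ := by simp [mul_assoc]

/-- Let `K` be a finite abelian group with squarefree exponent. The disjoint union
`Ω' = ⊔_{ψ ∈ Aut(K)} K_ψ` (where `K_ψ` is `K` with left action by left multiplication and
right action `x • k = x ψ(k)`) is left `F`-stable for the largest fusion system on `K`: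
for every `L ≤ K` and injective `φ : L → K`, the `L`-`K`-bisets `_LΩ'` and `_φΩ'` are
isomorphic. -/
theorem autUnion_leftStable_abelian {K : Type*} [CommGroup K] [Finite K]
    (hexp : Squarefree (Monoid.exponent K)) :
    ∃ B : Biset K ((K ≃* K) × K),
      (∀ (g : K) (p : (K ≃* K) × K), B.smul g p = (p.1, g * p.2)) ∧
        (∀ (p : (K ≃* K) × K) (k : K), B.rsmul p k = (p.1, p.2 * p.1 k)) ∧
        ∀ (L : Subgroup K) (φ : ↥L →* K), Function.Injective φ →
          ∃ f : ((K ≃* K) × K) ≃ ((K ≃* K) × K),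
            ∀ (l : ↥L) (x : (K ≃* K) × K) (k : K),
              f (B.rsmul (B.smul ↑l x) k) = B.rsmul (B.smul (φ l) (f x)) k := by
  refine ⟨autUnionBiset K, fun _ _ => rfl, fun _ _ => rfl, fun L φ hφ => ?_⟩
  obtain ⟨Φ, hΦ⟩ := exists_mulEquiv_extension hexp L hφ
  -- `Φ * ψ = ψ.trans Φ` in `MulAut K`, so this is `(ψ, x) ↦ (Φ ∘ ψ, Φ x)`
  refine ⟨(Equiv.mulLeft (Φ : MulAut K)).prodCongr Φ.toEquiv, fun l x k => ?_⟩
  simp [autUnionBiset, hΦ, MulAut.mul_apply]
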